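/- Let 0<q<1, a ∈ ℂ, and y ∈ ℂ with |y| < 1. With κ_s = Σ_{p=0}^{s} (−a·q^s)^p · q^{−p(p−1)/2}/(q;q)_p, both of the following series converge absolutely and are equal: Σ_{s=0}^{∞} κ_s·y^s = Σ_{s=0}^{∞} (a·q^{s+1}·y; q)_∞ · y^s, where (a q^{s+1} y;q)_∞ = Π_{j=0}^{∞}(1 − a y q^{s+1+j}). (Closed form of the inversion kernel K(a;y) from the matter-brane basis to the chord-number basis.) -/

import Mathlib

/-!
By Euler's identity `(x;q)_∞ = Σ_p (-x)^p q^{p(p-1)/2} / (q;q)_p`, the `s`-th term of the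
right-hand side is the `s`-th column sum `Σ_p K(p, s)` of the double series
`K(p, t) = (-a y q)^p q^{p(p-1)/2} / (q;q)_p · (y q^p)^t`, while `κ_s y^s` is its antidiagonal sum
`Σ_{p+t=s} K(p, t)`. Since `‖K(p, t)‖` is dominated by
`‖(-a y q)^p q^{p(p-1)/2} / (q;q)_p‖ · ‖y‖^t`, the double series converges absolutely and both
ways of summing it agree.

Euler's identity itself follows from the functional equation `E(x) = (1 - x) E(q x)` of the series
`E`, iterated `n` times, together with `E(qⁿ x) → E(0) = 1` by dominated convergence.
-/

/-- The q-Pochhammer symbol `(q;q)_n = Π_{j=0}^{n−1}(1 − q^{j+1})` (as a complex number). -/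
noncomputable def qPochQC (q : ℝ) (n : ℕ) : ℂ := ∏ j ∈ Finset.range n, (1 - (q : ℂ) ^ (j + 1))

/-- The infinite q-Pochhammer symbol `(x;q)_∞ = Π_{j=0}^{∞}(1 − x qʲ)`. -/
noncomputable def qPochInfC (q : ℝ) (x : ℂ) : ℂ := ∏' j : ℕ, (1 - x * (q : ℂ) ^ j)

/-- The inversion-kernel coefficients
`κ_s = Σ_{p=0}^{s} (−a·q^s)^p · q^{−p(p−1)/2} / (q;q)_p`. -/
noncomputable def kappa (q : ℝ) (a : ℂ) (s : ℕ) : ℂ :=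
  ∑ p ∈ Finset.range (s + 1),
    (-(a * (q : ℂ) ^ s)) ^ p / ((q : ℂ) ^ (p * (p - 1) / 2) * qPochQC q p)

open Finset Filter Topology

section EulerIdentity

variable {q : ℝ}

lemma qPochQC_succ (n : ℕ) : qPochQC q (n + 1) = qPochQC q n * (1 - (q : ℂ) ^ (n + 1)) :=
  prod_range_succ _ n

lemma one_sub_abs_le_norm_one_sub_pow_succ (hq : |q| < 1) (n : ℕ) :
    1 - |q| ≤ ‖(1 : ℂ) - (q : ℂ) ^ (n + 1)‖ := by
  have hpow : |q| ^ (n + 1) ≤ |q| := pow_le_of_le_one (abs_nonneg q) hq.le n.succ_ne_zero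
  calc 1 - |q| ≤ ‖(1 : ℂ)‖ - ‖(q : ℂ) ^ (n + 1)‖ := by
        rw [norm_one, norm_pow, Complex.norm_real, Real.norm_eq_abs]; linarith
    _ ≤ _ := norm_sub_norm_le _ _

lemma one_sub_pow_succ_ne_zero (hq : |q| < 1) (n : ℕ) : (1 : ℂ) - (q : ℂ) ^ (n + 1) ≠ 0 :=
  norm_pos_iff.1 ((sub_pos.2 hq).trans_le (one_sub_abs_le_norm_one_sub_pow_succ hq n))

lemma qPochQC_ne_zero (hq : |q| < 1) (n : ℕ) : qPochQC q n ≠ 0 :=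
  prod_ne_zero_iff.2 fun j _ => one_sub_pow_succ_ne_zero hq j

noncomputable def eulerTerm (q : ℝ) (x : ℂ) (p : ℕ) : ℂ :=
  (-x) ^ p * (q : ℂ) ^ (p * (p - 1) / 2) / qPochQC q p

@[simp]
lemma eulerTerm_zero (x : ℂ) : eulerTerm q x 0 = 1 := by
  simp [eulerTerm, qPochQC]

lemma eulerTerm_mul (c x : ℂ) (p : ℕ) : eulerTerm q (c * x) p = c ^ p * eulerTerm q x p := by
  simp only [eulerTerm, neg_mul_eq_mul_neg, mul_pow]
  ring

lemma continuous_eulerTerm (p : ℕ) : Continuous fun x => eulerTerm q x p := by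
  unfold eulerTerm
  fun_prop

lemma eulerTerm_succ (hq : |q| < 1) (x : ℂ) (p : ℕ) :
    eulerTerm q x (p + 1) = -x * (q : ℂ) ^ p / (1 - (q : ℂ) ^ (p + 1)) * eulerTerm q x p := by
  have hfactor := one_sub_pow_succ_ne_zero hq p
  have hpoch := qPochQC_ne_zero hq p
  simp only [eulerTerm, Nat.triangle_succ, qPochQC_succ]
  field_simp
  ring

lemma summable_norm_eulerTerm (hq : |q| < 1) (x : ℂ) : Summable fun p => ‖eulerTerm q x p‖ := by
  have h1q : 0 < 1 - |q| := sub_pos.2 hq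
  have hlim : Tendsto (fun p : ℕ => ‖x‖ * |q| ^ p / (1 - |q|)) atTop (𝓝 0) := by
    simpa using ((tendsto_pow_atTop_nhds_zero_of_lt_one (abs_nonneg q) hq).const_mul ‖x‖).div_const
      (1 - |q|)
  refine summable_of_ratio_norm_eventually_le (r := 1 / 2) (by norm_num) ?_
  filter_upwards [hlim.eventually_le_const (by norm_num : (0 : ℝ) < 1 / 2)] with p hp
  rw [norm_norm, norm_norm, eulerTerm_succ hq, norm_mul]
  refine mul_le_mul_of_nonneg_right (le_trans ?_ hp) (norm_nonneg _)
  rw [norm_div, norm_mul, norm_neg, norm_pow, Complex.norm_real, Real.norm_eq_abs]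
  exact div_le_div_of_nonneg_left (by positivity) h1q (one_sub_abs_le_norm_one_sub_pow_succ hq p)

lemma summable_eulerTerm (hq : |q| < 1) (x : ℂ) : Summable (eulerTerm q x) :=
  (summable_norm_eulerTerm hq x).of_norm

lemma eulerTerm_succ_eq_sub (hq : |q| < 1) (x : ℂ) (p : ℕ) :
    eulerTerm q x (p + 1) = eulerTerm q (q * x) (p + 1) - x * eulerTerm q (q * x) p := by
  have hfactor := one_sub_pow_succ_ne_zero hq p
  have hpoch := qPochQC_ne_zero hq p
  simp only [eulerTerm, Nat.triangle_succ, qPochQC_succ]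
  field_simp
  ring

lemma tsum_eulerTerm_eq_one_sub_mul (hq : |q| < 1) (x : ℂ) :
    ∑' p, eulerTerm q x p = (1 - x) * ∑' p, eulerTerm q (q * x) p := by
  have hs := summable_eulerTerm hq (q * x)
  have hs_succ : Summable fun p => eulerTerm q (q * x) (p + 1) := (summable_nat_add_iff 1).2 hs
  rw [(summable_eulerTerm hq x).tsum_eq_zero_add, hs.tsum_eq_zero_add,
    tsum_congr (eulerTerm_succ_eq_sub hq x), hs_succ.tsum_sub (hs.mul_left x), tsum_mul_left,
    hs.tsum_eq_zero_add]
  simp only [eulerTerm_zero]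
  ring

lemma tsum_eulerTerm_eq_prod_mul (hq : |q| < 1) (x : ℂ) (n : ℕ) :
    ∑' p, eulerTerm q x p =
      (∏ j ∈ range n, (1 - x * (q : ℂ) ^ j)) * ∑' p, eulerTerm q ((q : ℂ) ^ n * x) p := by
  induction n with
  | zero => simp
  | succ n ih =>
    rw [ih, tsum_eulerTerm_eq_one_sub_mul hq, prod_range_succ, pow_succ', mul_assoc (q : ℂ),
      mul_comm x, mul_assoc]

lemma tendsto_tsum_eulerTerm_pow_mul (hq : |q| < 1) (x : ℂ) :
    Tendsto (fun n => ∑' p, eulerTerm q ((q : ℂ) ^ n * x) p) atTop (𝓝 1) := by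
  have hqn : Tendsto (fun n => (q : ℂ) ^ n) atTop (𝓝 0) :=
    tendsto_pow_atTop_nhds_zero_of_norm_lt_one (by simpa using hq)
  have hsum0 : ∑' p, eulerTerm q 0 p = 1 := by
    rw [tsum_eq_single 0 fun p hp => by simp [eulerTerm, zero_pow hp], eulerTerm_zero]
  rw [← hsum0]
  refine tendsto_tsum_of_dominated_convergence (summable_norm_eulerTerm hq x)
    (fun p => ((continuous_eulerTerm p).tendsto 0).comp (by simpa using hqn.mul_const x))
    (Eventually.of_forall fun n p => ?_)
  rw [eulerTerm_mul, norm_mul, norm_pow, norm_pow, Complex.norm_real, Real.norm_eq_abs]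
  exact mul_le_of_le_one_left (norm_nonneg _) (pow_le_one₀ (by positivity)
    (pow_le_one₀ (abs_nonneg q) hq.le))

lemma multipliable_one_sub_mul_pow (hq : |q| < 1) (x : ℂ) :
    Multipliable fun j : ℕ => 1 - x * (q : ℂ) ^ j := by
  simp_rw [sub_eq_add_neg]
  refine Complex.multipliable_one_add_of_summable (Summable.neg ?_)
  exact (summable_geometric_of_norm_lt_one (by simpa using hq)).mul_left x

theorem hasSum_eulerTerm (hq : |q| < 1) (x : ℂ) : HasSum (eulerTerm q x) (qPochInfC q x) := by
  have hlim : Tendsto (fun _ : ℕ => ∑' p, eulerTerm q x p) atTop (𝓝 (qPochInfC q x)) := by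
    simpa only [qPochInfC, ← tsum_eulerTerm_eq_prod_mul hq x, mul_one] using
      (multipliable_one_sub_mul_pow hq x).tendsto_prod_tprod_nat.mul
        (tendsto_tsum_eulerTerm_pow_mul hq x)
  exact (summable_eulerTerm hq x).hasSum_iff.2 (tendsto_nhds_unique tendsto_const_nhds hlim)

end EulerIdentity

theorem HasSum.sum_antidiagonal {α A : Type*} [AddCommMonoid α] [TopologicalSpace α]
    [ContinuousAdd α] [RegularSpace α] [AddCommMonoid A] [HasAntidiagonal A] {f : A × A → α} {a : α}
    (h : HasSum f a) : HasSum (fun n => ∑ kl ∈ antidiagonal n, f kl) a :=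
  (HasAntidiagonal.sigmaAntidiagonalEquivProd.hasSum_iff.2 h).sigma fun n =>
    (antidiagonal n).hasSum f

lemma summable_norm_sum_antidiagonal {E A : Type*} [SeminormedAddCommGroup E] [AddCommMonoid A]
    [HasAntidiagonal A] {f : A × A → E} (hf : Summable fun x => ‖f x‖) :
    Summable fun n => ‖∑ kl ∈ antidiagonal n, f kl‖ :=
  hf.hasSum.sum_antidiagonal.summable.of_nonneg_of_le (fun _ => norm_nonneg _)
    fun _ => norm_sum_le _ _

lemma summable_norm_tsum_fst {E β γ : Type*} [SeminormedAddCommGroup E] {f : β × γ → E}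
    (hf : Summable fun x => ‖f x‖) : Summable fun c => ‖∑' b, f (b, c)‖ :=
  hf.prod_symm.prod.of_nonneg_of_le (fun _ => norm_nonneg _)
    fun c => norm_tsum_le_tsum_norm (hf.prod_symm.prod_factor c)

section InversionKernel

variable {q : ℝ}

noncomputable def inversionKernelTerm (q : ℝ) (a y : ℂ) (pt : ℕ × ℕ) : ℂ :=
  eulerTerm q (a * y * q) pt.1 * (y * (q : ℂ) ^ pt.1) ^ pt.2

lemma summable_norm_inversionKernelTerm (hq : |q| < 1) (a : ℂ) {y : ℂ} (hy : ‖y‖ < 1) :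
    Summable fun pt => ‖inversionKernelTerm q a y pt‖ := by
  have hgeom : Summable fun t : ℕ => ‖y ^ t‖ := by
    simpa only [norm_pow] using summable_geometric_of_lt_one (norm_nonneg y) hy
  refine Summable.of_nonneg_of_le (fun _ => norm_nonneg _) (fun pt => ?_)
    ((summable_norm_eulerTerm hq (a * y * q)).mul_norm hgeom)
  have hqp : ‖(q : ℂ) ^ pt.1‖ ^ pt.2 ≤ 1 := by
    rw [norm_pow, Complex.norm_real, Real.norm_eq_abs]
    exact pow_le_one₀ (by positivity) (pow_le_one₀ (abs_nonneg q) hq.le)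
  calc ‖inversionKernelTerm q a y pt‖
      = ‖eulerTerm q (a * y * q) pt.1‖ * (‖y ^ pt.2‖ * ‖(q : ℂ) ^ pt.1‖ ^ pt.2) := by
        rw [inversionKernelTerm, norm_mul, mul_pow, norm_mul, norm_pow, norm_pow, norm_pow]
    _ ≤ ‖eulerTerm q (a * y * q) pt.1 * y ^ pt.2‖ := by
        rw [norm_mul]
        exact mul_le_mul_of_nonneg_left (mul_le_of_le_one_right (norm_nonneg _) hqp)
          (norm_nonneg _)

lemma hasSum_inversionKernelTerm_fst (hq : |q| < 1) (a y : ℂ) (s : ℕ) :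
    HasSum (fun p => inversionKernelTerm q a y (p, s))
      (qPochInfC q (a * y * (q : ℂ) ^ (s + 1)) * y ^ s) := by
  refine ((hasSum_eulerTerm hq (a * y * (q : ℂ) ^ (s + 1))).mul_right (y ^ s)).congr_fun
    fun p => ?_
  rw [inversionKernelTerm, show a * y * (q : ℂ) ^ (s + 1) = (q : ℂ) ^ s * (a * y * q) by ring,
    eulerTerm_mul ((q : ℂ) ^ s)]
  ring

lemma kappa_mul_pow_eq_sum_antidiagonal (hq0 : q ≠ 0) (hq : |q| < 1) (a y : ℂ) (s : ℕ) :
    kappa q a s * y ^ s = ∑ pt ∈ antidiagonal s, inversionKernelTerm q a y pt := by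
  rw [Nat.sum_antidiagonal_eq_sum_range_succ_mk, kappa, sum_mul]
  refine sum_congr rfl fun p hp => ?_
  obtain ⟨t, rfl⟩ := Nat.exists_eq_add_of_le (Nat.lt_succ_iff.1 (mem_range.1 hp))
  rw [Nat.add_sub_cancel_left]
  have hexp : (p + t) * p = p * (p - 1) / 2 * 2 + p + p * t := by
    rw [Nat.div_two_mul_two_of_even (Nat.even_mul_pred_self p)]
    rcases p with _ | n
    · simp
    · rw [Nat.add_sub_cancel]; ring
  have hpow : (q : ℂ) ^ ((p + t) * p) =
      ((q : ℂ) ^ (p * (p - 1) / 2)) ^ 2 * (q : ℂ) ^ p * ((q : ℂ) ^ p) ^ t := by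
    rw [hexp, pow_add, pow_add, pow_mul, pow_mul]
  have hpoch := qPochQC_ne_zero hq p
  have hq0' : (q : ℂ) ≠ 0 := Complex.ofReal_ne_zero.2 hq0
  calc _ = (-a) ^ p * (q : ℂ) ^ ((p + t) * p) / ((q : ℂ) ^ (p * (p - 1) / 2) * qPochQC q p)
        * y ^ (p + t) := by
        rw [neg_mul_eq_neg_mul, mul_pow, ← pow_mul]
    _ = _ := by
        rw [hpow]
        simp only [inversionKernelTerm, eulerTerm]
        field_simp
        ring

end InversionKernel

/-- closed form of the inversion kernel: for `|y| < 1` both series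
`Σ_s κ_s y^s` and `Σ_s (a q^{s+1} y;q)_∞ y^s` converge absolutely and are equal. -/
theorem stmt_15 (q : ℝ) (hq0 : 0 < q) (hq1 : q < 1) (a y : ℂ)
    (hy : ‖y‖ < 1) :
    Summable (fun s : ℕ => ‖kappa q a s * y ^ s‖) ∧
    Summable (fun s : ℕ =>
      ‖qPochInfC q (a * y * (q : ℂ) ^ (s + 1)) * y ^ s‖) ∧
    ∑' s : ℕ, kappa q a s * y ^ s
      = ∑' s : ℕ, qPochInfC q (a * y * (q : ℂ) ^ (s + 1)) * y ^ s := by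
  have hq : |q| < 1 := abs_lt.2 ⟨by linarith, hq1⟩
  have hkappa := kappa_mul_pow_eq_sum_antidiagonal hq0.ne' hq a y
  have hcol := hasSum_inversionKernelTerm_fst hq a y
  have hK := summable_norm_inversionKernelTerm hq a hy
  refine ⟨?_, ?_, ?_⟩
  · simpa only [hkappa] using summable_norm_sum_antidiagonal hK
  · simpa only [fun s => (hcol s).tsum_eq] using summable_norm_tsum_fst hK
  · have hsum := hK.of_norm.hasSum
    rw [(hsum.sum_antidiagonal.congr_fun hkappa).tsum_eq]
    exact (((Equiv.prodComm ℕ ℕ).hasSum_iff.2 hsum).prod_fiberwise hcol).tsum_eq.symm
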